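/- Let x̄ be a strongly stable fractional matching with x̄ ≠ x^{μ_x̄}, where μ_x̄ assigns each firm its q_f best workers in the support of x̄. Set α = min{ x̄_{f,w} : x^{μ_x̄}_{f,w} = 1 }. Then 0 < α < 1, and y = (x̄ − α·x^{μ_x̄})/(1−α) is again a strongly stable fractional matching whose support is a proper subset of the support of x̄. -/

import Mathlib

open Finset
open scoped Classical

/-- A many-to-one matching market: firms `F`, workers `W`, quotas `q`,
strict preference relations of firms over individual workers and of workers
over firms, and acceptability predicates. -/
structure Market (F W : Type*) where
  q : F → ℕ
  qpos : ∀ f, 1 ≤ q f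
  prefF : F → W → W → Prop
  prefW : W → F → F → Prop
  accF : F → W → Prop
  accW : W → F → Prop
  prefF_trans : ∀ f, Transitive (prefF f)
  prefF_irrefl : ∀ f w, ¬ prefF f w w
  prefF_total : ∀ f j w, j ≠ w → prefF f j w ∨ prefF f w j
  prefW_trans : ∀ w, Transitive (prefW w)
  prefW_irrefl : ∀ w f, ¬ prefW w f f
  prefW_total : ∀ w i f, i ≠ f → prefW w i f ∨ prefW w f i

namespace Market

variable {F W : Type*} [Fintype F] [Fintype W] (M : Market F W)

def acceptable (f : F) (w : W) : Prop := M.accF f w ∧ M.accW w f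

def weakF (f : F) (j w : W) : Prop := M.prefF f j w ∨ j = w

def weakW (w : W) (i f : F) : Prop := M.prefW w i f ∨ i = f

noncomputable def rowSumAbove (x : F → W → ℝ) (f : F) (w : W) : ℝ :=
  ∑ j ∈ univ.filter (fun j => M.weakF f j w), x f j

noncomputable def rowSumStrict (x : F → W → ℝ) (f : F) (w : W) : ℝ :=
  ∑ j ∈ univ.filter (fun j => M.prefF f j w), x f j

noncomputable def colSumAbove (x : F → W → ℝ) (w : W) (f : F) : ℝ :=
  ∑ i ∈ univ.filter (fun i => M.weakW w i f), x i w

noncomputable def colSumStrict (x : F → W → ℝ) (w : W) (f : F) : ℝ :=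
  ∑ i ∈ univ.filter (fun i => M.prefW w i f), x i w

/-- The SCP linear system: nonnegativity, firm capacity, worker capacity,
zero on unacceptable pairs, and the stability inequality on acceptable pairs. -/
def SCP (x : F → W → ℝ) : Prop :=
  (∀ f w, 0 ≤ x f w) ∧
  (∀ f, ∑ j, x f j ≤ (M.q f : ℝ)) ∧
  (∀ w, ∑ i, x i w ≤ 1) ∧
  (∀ f w, ¬ M.acceptable f w → x f w = 0) ∧
  (∀ f w, M.acceptable f w →
    (M.q f : ℝ) ≤
      M.rowSumStrict x f w + (M.q f : ℝ) * M.colSumStrict x w f + (M.q f : ℝ) * x f w)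

/-- The strong stability condition at a pair `(f, w)`. -/
def StrongCondAt (x : F → W → ℝ) (f : F) (w : W) : Prop :=
  ((M.q f : ℝ) - M.rowSumAbove x f w) * (1 - M.colSumAbove x w f) = 0

/-- A strongly stable fractional matching. -/
def StronglyStable (x : F → W → ℝ) : Prop :=
  M.SCP x ∧ ∀ f w, M.acceptable f w → M.StrongCondAt x f w

def isMatching (μ : F → Finset W) : Prop :=
  (∀ f, (μ f).card ≤ M.q f) ∧ ∀ w f f', w ∈ μ f → w ∈ μ f' → f = f'

def indivRational (μ : F → Finset W) : Prop := ∀ f w, w ∈ μ f → M.acceptable f w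

def blocks (μ : F → Finset W) (f : F) (w : W) : Prop :=
  w ∉ μ f ∧ M.acceptable f w ∧ (∀ f', w ∈ μ f' → M.prefW w f f') ∧
    ((μ f).card < M.q f ∨ ∃ w' ∈ μ f, M.prefF f w w')

def isStable (μ : F → Finset W) : Prop :=
  M.isMatching μ ∧ M.indivRational μ ∧ ∀ f w, ¬ M.blocks μ f w

noncomputable def incidence (_m : Market F W) (μ : F → Finset W) : F → W → ℝ :=
  fun f w => if w ∈ μ f then 1 else 0

def firmWeakDom (x y : F → W → ℝ) (f : F) : Prop :=
  ∀ w, M.rowSumAbove y f w ≤ M.rowSumAbove x f w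

/-- All firms weakly prefer `x` to `y`, at least one strictly. -/
def firmsPrefer (x y : F → W → ℝ) : Prop :=
  (∀ f, M.firmWeakDom x y f) ∧ ∃ f w, M.rowSumAbove y f w < M.rowSumAbove x f w

end Market

namespace Market

variable {F W : Type*} [Fintype F] [Fintype W] (M : Market F W)

noncomputable def supportRow (_m : Market F W) (x : F → W → ℝ) (f : F) : Finset W :=
  univ.filter (fun w => 0 < x f w)

/-- `μ_x(f)`: the `q f` most preferred workers of `f` among those with `x f w > 0`. -/
noncomputable def muX (x : F → W → ℝ) (f : F) : Finset W :=
  (M.supportRow x f).filter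
    (fun w => ((M.supportRow x f).filter (fun w' => M.prefF f w' w)).card < M.q f)

end Market

/-!
For a strongly stable `x`, every worker `w ∈ μ_x(f)` has a full column that vanishes at firms
`w` ranks below `f`, so `μ_x` is a matching. Rows of `x` sum to at most `|μ_x(f)|` and columns of
`x^{μ_x}` to at most those of `x`; double counting turns both inequalities into equalities.
A tight constraint of `x` (a row up-set summing to `q f`, or a column up-set summing to `1`) then
exhausts the whole row or column, so `x` vanishes outside the up-set and so does `x^{μ_x}`, whose
support lies in that of `x`: every tight constraint of `x` is tight for `x^{μ_x}`. Hence
`y = (x - α x^{μ_x}) / (1 - α)` has the same totals and the same tight constraints as `x`, which is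
strong stability, while the entry attaining `α` leaves the support.
-/

namespace Finset

variable {ι κ : Type*}

lemma sum_le_card_filter_pos (s : Finset ι) {v : ι → ℝ} (hv : ∀ i ∈ s, v i ≤ 1) :
    ∑ i ∈ s, v i ≤ #(s.filter fun i => 0 < v i) := by
  rw [← sum_boole]
  refine sum_le_sum fun i hi => ?_
  split_ifs with h
  · exact hv i hi
  · exact not_lt.1 h

lemma of_pos_of_sum_le_sum_filter [Fintype ι] {v : ι → ℝ} {p : ι → Prop} [DecidablePred p]
    (hv : ∀ i, 0 ≤ v i) (hsum : ∑ i, v i ≤ ∑ i ∈ univ.filter p, v i) {i : ι} (hi : 0 < v i) :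
    p i := by
  by_contra hp
  have := sum_lt_sum_of_subset (filter_subset p univ) (mem_univ i) (by simp [hp]) hi
    fun j _ _ => hv j
  linarith

lemma sum_filter_eq_of_support_subset_of_tight [Fintype ι] {u v : ι → ℝ} {p : ι → Prop}
    [DecidablePred p] {c : ℝ} (hv : ∀ i, 0 ≤ v i) (hsupp : ∀ i, u i ≠ 0 → 0 < v i)
    (hsum : ∑ i, u i = ∑ i, v i) (hcap : ∑ i, v i ≤ c) (htight : ∑ i ∈ univ.filter p, v i = c) :
    ∑ i ∈ univ.filter p, u i = c := by
  have hle : ∑ i ∈ univ.filter p, v i ≤ ∑ i, v i :=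
    sum_le_sum_of_subset_of_nonneg (filter_subset p univ) fun i _ _ => hv i
  rw [sum_filter_of_ne fun i _ hi => of_pos_of_sum_le_sum_filter hv (by linarith) (hsupp i hi)]
  linarith

lemma min_le_card_filter_card_lt {r : ι → ι → Prop} (hr : WellFounded r) (s : Finset ι)
    (q : ℕ) : min q #s ≤ #(s.filter fun a => #(s.filter fun b => r b a) < q) := by
  set T := s.filter fun a => #(s.filter fun b => r b a) < q
  by_contra! hT
  have hne : (s \ T).Nonempty :=
    sdiff_nonempty.2 fun hsT => (card_le_card hsT).not_gt (hT.trans_le (min_le_right _ _))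
  obtain ⟨a, ha, hmin⟩ := hr.has_min (s \ T : Set ι) (by exact_mod_cast hne)
  rw [Set.mem_sdiff, mem_coe, mem_coe] at ha
  -- `a` is a best element of `s \ T`, so everything above `a` lies in `T`
  have habove : s.filter (fun b => r b a) ⊆ T := fun b hb => by
    rw [mem_filter] at hb
    by_contra hbT
    exact hmin b (by simp [hb.1, hbT]) hb.2
  exact ha.2 (mem_filter.2 ⟨ha.1, (card_le_card habove).trans_lt (hT.trans_le (min_le_left _ _))⟩)

lemma sum_row_eq_and_sum_col_eq_of_le [Fintype ι] [Fintype κ] {x z : ι → κ → ℝ}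
    (hrow : ∀ i, ∑ j, x i j ≤ ∑ j, z i j) (hcol : ∀ j, ∑ i, z i j ≤ ∑ i, x i j) :
    (∀ i, ∑ j, x i j = ∑ j, z i j) ∧ ∀ j, ∑ i, z i j = ∑ i, x i j := by
  have hrows : ∑ i, ∑ j, x i j ≤ ∑ i, ∑ j, z i j := sum_le_sum fun i _ => hrow i
  have hcols : ∑ j, ∑ i, z i j ≤ ∑ j, ∑ i, x i j := sum_le_sum fun j _ => hcol j
  have hx : ∑ j, ∑ i, x i j = ∑ i, ∑ j, x i j := sum_comm
  have hz : ∑ j, ∑ i, z i j = ∑ i, ∑ j, z i j := sum_comm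
  refine ⟨fun i => ?_, fun j => ?_⟩
  · exact (sum_eq_sum_iff_of_le fun i _ => hrow i).1 (by linarith) i (mem_univ i)
  · exact (sum_eq_sum_iff_of_le fun j _ => hcol j).1 (by linarith) j (mem_univ j)

lemma sum_sub_mul_div_of_sum_eq (s : Finset ι) {a b : ι → ℝ} {α : ℝ} (hα : α ≠ 1)
    (h : ∑ i ∈ s, b i = ∑ i ∈ s, a i) : ∑ i ∈ s, (a i - α * b i) / (1 - α) = ∑ i ∈ s, a i := by
  rw [← sum_div, sum_sub_distrib, ← mul_sum, h, div_eq_iff (sub_ne_zero.2 hα.symm)]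
  ring

end Finset

lemma Set.setOf_pos_sub_mul_div_ssubset {ι κ : Type*} {x z : ι → κ → ℝ} {α : ℝ} (hα : α < 1)
    (hz : ∀ i j, 0 ≤ α * z i j) {i₀ : ι} {j₀ : κ} (h₀ : x i₀ j₀ = α * z i₀ j₀)
    (hpos : 0 < x i₀ j₀) :
    {p : ι × κ | 0 < (x p.1 p.2 - α * z p.1 p.2) / (1 - α)} ⊂ {p | 0 < x p.1 p.2} := by
  rw [Set.ssubset_iff_of_subset]
  · exact ⟨(i₀, j₀), hpos, by simp [h₀]⟩
  · intro p hp
    have := (div_pos_iff_of_pos_right (sub_pos.2 hα)).1 hp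
    show 0 < x p.1 p.2
    linarith [hz p.1 p.2]

namespace Market

variable {F W : Type*} {M : Market F W} {x : F → W → ℝ} {f : F} {w : W}

lemma incidence_nonneg (μ : F → Finset W) (f : F) (w : W) : 0 ≤ M.incidence μ f w := by
  unfold incidence
  split_ifs <;> norm_num

section

variable [Fintype W]

lemma rowSumAbove_eq_rowSumStrict_add (x : F → W → ℝ) (f : F) (w : W) :
    M.rowSumAbove x f w = M.rowSumStrict x f w + x f w := by
  have : univ.filter (fun j => M.weakF f j w) = insert w (univ.filter fun j => M.prefF f j w) := by
    ext j
    simp [weakF, or_comm]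
  rw [rowSumAbove, this, sum_insert (by simp [M.prefF_irrefl]), rowSumStrict, add_comm]

lemma pos_of_mem_muX (h : w ∈ M.muX x f) : 0 < x f w := by
  simpa [supportRow] using (mem_filter.1 h).1

lemma pos_of_incidence_muX_ne_zero (h : M.incidence (M.muX x) f w ≠ 0) : 0 < x f w :=
  pos_of_mem_muX (by by_contra hw; exact h (if_neg hw))

lemma min_le_card_muX (x : F → W → ℝ) (f : F) :
    min (M.q f) #(M.supportRow x f) ≤ #(M.muX x f) :=
  min_le_card_filter_card_lt
    (@Finite.wellFounded_of_trans_of_irrefl _ _ (M.prefF f) ⟨fun _ _ _ => @M.prefF_trans f _ _ _⟩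
      ⟨M.prefF_irrefl f⟩) _ _

lemma sum_incidence_row (μ : F → Finset W) (f : F) : ∑ j, M.incidence μ f j = #(μ f) := by
  simp [incidence]

end

lemma colSumAbove_eq_colSumStrict_add [Fintype F] (x : F → W → ℝ) (w : W) (f : F) :
    M.colSumAbove x w f = M.colSumStrict x w f + x f w := by
  have : univ.filter (fun i => M.weakW w i f) = insert f (univ.filter fun i => M.prefW w i f) := by
    ext i
    simp [weakW, or_comm]
  rw [colSumAbove, this, sum_insert (by simp [M.prefW_irrefl]), colSumStrict, add_comm]

variable [Fintype F] [Fintype W]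

lemma strongCondAt_iff :
    M.StrongCondAt x f w ↔ M.rowSumAbove x f w = M.q f ∨ M.colSumAbove x w f = 1 := by
  rw [StrongCondAt, mul_eq_zero, sub_eq_zero, sub_eq_zero, eq_comm, @eq_comm _ 1]

lemma q_le_of_strongCondAt (hnonneg : ∀ f w, 0 ≤ x f w) (h : M.StrongCondAt x f w) :
    (M.q f : ℝ) ≤
      M.rowSumStrict x f w + (M.q f : ℝ) * M.colSumStrict x w f + (M.q f : ℝ) * x f w := by
  have hq : (1 : ℝ) ≤ M.q f := by exact_mod_cast M.qpos f
  have hrow : 0 ≤ M.rowSumStrict x f w := sum_nonneg fun j _ => hnonneg f j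
  have hcol : 0 ≤ M.colSumStrict x w f := sum_nonneg fun i _ => hnonneg i w
  rw [strongCondAt_iff, rowSumAbove_eq_rowSumStrict_add, colSumAbove_eq_colSumStrict_add] at h
  rcases h with h | h
  · nlinarith [hnonneg f w]
  · nlinarith

namespace StronglyStable

lemma nonneg (hx : M.StronglyStable x) : ∀ f w, 0 ≤ x f w := hx.1.1

lemma sum_row_le (hx : M.StronglyStable x) (f : F) : ∑ j, x f j ≤ M.q f := hx.1.2.1 f

lemma sum_col_le_one (hx : M.StronglyStable x) (w : W) : ∑ i, x i w ≤ 1 := hx.1.2.2.1 w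

lemma eq_zero_of_not_acceptable (hx : M.StronglyStable x) (h : ¬ M.acceptable f w) : x f w = 0 :=
  hx.1.2.2.2.1 f w h

lemma le_one (hx : M.StronglyStable x) (f : F) (w : W) : x f w ≤ 1 :=
  (single_le_sum (fun i _ => hx.nonneg i w) (mem_univ f)).trans (hx.sum_col_le_one w)

lemma acceptable_of_pos (hx : M.StronglyStable x) (h : 0 < x f w) : M.acceptable f w := by
  by_contra hacc
  exact h.ne' (hx.eq_zero_of_not_acceptable hacc)

lemma colSumAbove_le_sum (hx : M.StronglyStable x) (w : W) (f : F) :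
    M.colSumAbove x w f ≤ ∑ i, x i w :=
  sum_le_sum_of_subset_of_nonneg (filter_subset _ _) fun i _ _ => hx.nonneg i w

theorem peel {z : F → W → ℝ} {α : ℝ} (hx : M.StronglyStable x) (hα : α < 1)
    (hxz : ∀ f w, α * z f w ≤ x f w) (hz : ∀ f w, ¬ M.acceptable f w → z f w = 0)
    (hrow : ∀ f, ∑ j, z f j = ∑ j, x f j) (hcol : ∀ w, ∑ i, z i w = ∑ i, x i w)
    (hrow_tight : ∀ f w, M.rowSumAbove x f w = M.q f → M.rowSumAbove z f w = M.q f)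
    (hcol_tight : ∀ f w, M.colSumAbove x w f = 1 → M.colSumAbove z w f = 1) :
    M.StronglyStable fun f w => (x f w - α * z f w) / (1 - α) := by
  set y := fun f w => (x f w - α * z f w) / (1 - α)
  have hα' : α ≠ 1 := hα.ne
  have hy : ∀ f w, 0 ≤ y f w := fun f w => div_nonneg (sub_nonneg.2 (hxz f w)) (by linarith)
  have hstrong : ∀ f w, M.acceptable f w → M.StrongCondAt y f w := fun f w hacc => by
    rcases strongCondAt_iff.1 (hx.2 f w hacc) with h | h
    · refine strongCondAt_iff.2 (Or.inl ?_)
      rw [← h]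
      exact sum_sub_mul_div_of_sum_eq _ hα' ((hrow_tight f w h).trans h.symm)
    · refine strongCondAt_iff.2 (Or.inr ?_)
      rw [← h]
      exact sum_sub_mul_div_of_sum_eq _ hα' ((hcol_tight f w h).trans h.symm)
  refine ⟨⟨hy, fun f => ?_, fun w => ?_, fun f w hacc => ?_,
    fun f w hacc => q_le_of_strongCondAt hy (hstrong f w hacc)⟩, hstrong⟩
  · rw [sum_sub_mul_div_of_sum_eq _ hα' (hrow f)]
    exact hx.sum_row_le f
  · rw [sum_sub_mul_div_of_sum_eq _ hα' (hcol w)]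
    exact hx.sum_col_le_one w
  · simp [y, hx.eq_zero_of_not_acceptable hacc, hz f w hacc]

lemma sum_row_le_card_muX (hx : M.StronglyStable x) (f : F) : ∑ j, x f j ≤ #(M.muX x f) := by
  have hsupp : ∑ j, x f j ≤ #(M.supportRow x f) :=
    sum_le_card_filter_pos _ fun j _ => hx.le_one f j
  have := le_min (hx.sum_row_le f) hsupp
  exact this.trans (by exact_mod_cast min_le_card_muX x f)

lemma colSumAbove_eq_one_of_mem_muX (hx : M.StronglyStable x) (h : w ∈ M.muX x f) :
    M.colSumAbove x w f = 1 := by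
  have hcap : M.colSumAbove x w f ≤ 1 := (hx.colSumAbove_le_sum w f).trans (hx.sum_col_le_one w)
  rcases strongCondAt_iff.1 (hx.2 f w (hx.acceptable_of_pos (pos_of_mem_muX h))) with hrow | hcol
  swap
  · exact hcol
  -- fewer than `q f` support workers are above `w`, each of weight at most one, so `x f w = 1`
  have hrank : (#((M.supportRow x f).filter fun j => M.prefF f j w) : ℝ) + 1 ≤ M.q f := by
    exact_mod_cast (mem_filter.1 h).2
  have hstrict : M.rowSumStrict x f w ≤ #((M.supportRow x f).filter fun j => M.prefF f j w) := by
    rw [supportRow, filter_comm]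
    exact sum_le_card_filter_pos _ fun j _ => hx.le_one f j
  have hcolStrict : 0 ≤ M.colSumStrict x w f := sum_nonneg fun i _ => hx.nonneg i w
  rw [rowSumAbove_eq_rowSumStrict_add] at hrow
  rw [colSumAbove_eq_colSumStrict_add] at hcap ⊢
  linarith

lemma weakW_of_mem_muX (hx : M.StronglyStable x) (h : w ∈ M.muX x f) {i : F} (hi : 0 < x i w) :
    M.weakW w i f :=
  of_pos_of_sum_le_sum_filter (v := fun i => x i w) (hx.nonneg · w)
    ((hx.sum_col_le_one w).trans (hx.colSumAbove_eq_one_of_mem_muX h).ge) hi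

lemma eq_of_mem_muX (hx : M.StronglyStable x) {f' : F} (h : w ∈ M.muX x f)
    (h' : w ∈ M.muX x f') : f = f' := by
  rcases hx.weakW_of_mem_muX h' (pos_of_mem_muX h) with hff' | rfl
  · rcases hx.weakW_of_mem_muX h (pos_of_mem_muX h') with hf'f | rfl
    · exact (M.prefW_irrefl w f (M.prefW_trans w hff' hf'f)).elim
    · rfl
  · rfl

lemma sum_incidence_muX_col_le (hx : M.StronglyStable x) (w : W) :
    ∑ i, M.incidence (M.muX x) i w ≤ ∑ i, x i w := by
  rw [show ∑ i, M.incidence (M.muX x) i w = #(univ.filter fun i => w ∈ M.muX x i) by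
    simp [incidence]]
  rcases (univ.filter fun i => w ∈ M.muX x i).eq_empty_or_nonempty with h | ⟨f, hf⟩
  · rw [h, card_empty, Nat.cast_zero]
    exact sum_nonneg fun i _ => hx.nonneg i w
  · have hle : #(univ.filter fun i => w ∈ M.muX x i) ≤ 1 :=
      card_le_one.2 fun a ha b hb => hx.eq_of_mem_muX (mem_filter.1 ha).2 (mem_filter.1 hb).2
    calc (#(univ.filter fun i => w ∈ M.muX x i) : ℝ) ≤ 1 := by exact_mod_cast hle
      _ = M.colSumAbove x w f := (hx.colSumAbove_eq_one_of_mem_muX (mem_filter.1 hf).2).symm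
      _ ≤ ∑ i, x i w := hx.colSumAbove_le_sum w f

lemma sum_incidence_muX (hx : M.StronglyStable x) :
    (∀ f, ∑ j, x f j = ∑ j, M.incidence (M.muX x) f j) ∧
      ∀ w, ∑ i, M.incidence (M.muX x) i w = ∑ i, x i w :=
  sum_row_eq_and_sum_col_eq_of_le
    (fun f => (hx.sum_row_le_card_muX f).trans_eq (sum_incidence_row _ f).symm)
    hx.sum_incidence_muX_col_le

lemma rowSumAbove_incidence_muX (hx : M.StronglyStable x) (h : M.rowSumAbove x f w = M.q f) :
    M.rowSumAbove (M.incidence (M.muX x)) f w = M.q f :=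
  sum_filter_eq_of_support_subset_of_tight (hx.nonneg f) (fun _ => pos_of_incidence_muX_ne_zero)
    (hx.sum_incidence_muX.1 f).symm (hx.sum_row_le f) h

lemma colSumAbove_incidence_muX (hx : M.StronglyStable x) (h : M.colSumAbove x w f = 1) :
    M.colSumAbove (M.incidence (M.muX x)) w f = 1 :=
  sum_filter_eq_of_support_subset_of_tight (v := fun i => x i w) (hx.nonneg · w)
    (fun _ => pos_of_incidence_muX_ne_zero) (hx.sum_incidence_muX.2 w) (hx.sum_col_le_one w) h

end StronglyStable

end Market

/-- Peeling off `μ_x` from a strongly stable fractional matching `x ≠ x^{μ_x}`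
with coefficient `α = min { x f w : x^{μ_x} f w = 1 }` yields again a strongly
stable fractional matching with strictly smaller support. -/
theorem peel_off_muX {F W : Type*} [Fintype F] [Fintype W]
    (M : Market F W) (x : F → W → ℝ) (hx : M.StronglyStable x)
    (hne : x ≠ M.incidence (M.muX x))
    (α : ℝ) (hα : IsLeast {r : ℝ | ∃ f w, w ∈ M.muX x f ∧ x f w = r} α) :
    0 < α ∧ α < 1 ∧
    M.StronglyStable (fun f w => (x f w - α * M.incidence (M.muX x) f w) / (1 - α)) ∧
    {p : F × W | 0 < (x p.1 p.2 - α * M.incidence (M.muX x) p.1 p.2) / (1 - α)} ⊂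
      {p : F × W | 0 < x p.1 p.2} := by
  obtain ⟨⟨f₀, w₀, hw₀, hα₀⟩, hαmin⟩ := hα
  have hαpos : 0 < α := hα₀ ▸ Market.pos_of_mem_muX hw₀
  have hαle : ∀ f w, α * M.incidence (M.muX x) f w ≤ x f w := fun f w => by
    unfold Market.incidence
    split_ifs with h
    · simpa using hαmin ⟨f, w, h, rfl⟩
    · simpa using hx.nonneg f w
  obtain ⟨hrow, hcol⟩ := hx.sum_incidence_muX
  have hα1 : α < 1 := by
    by_contra! h1
    have hle : ∀ f w, M.incidence (M.muX x) f w ≤ x f w := fun f w =>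
      (le_mul_of_one_le_left (Market.incidence_nonneg _ f w) h1).trans (hαle f w)
    exact hne (funext fun f => funext fun w =>
      ((sum_eq_sum_iff_of_le fun j _ => hle f j).1 (hrow f).symm w (mem_univ w)).symm)
  refine ⟨hαpos, hα1, hx.peel hα1 hαle ?_ (fun f => (hrow f).symm) hcol
    (fun _ _ => hx.rowSumAbove_incidence_muX) (fun _ _ => hx.colSumAbove_incidence_muX), ?_⟩
  · intro f w hacc
    by_contra h
    exact hacc (hx.acceptable_of_pos (Market.pos_of_incidence_muX_ne_zero h))
  · exact Set.setOf_pos_sub_mul_div_ssubset hα1 (fun f w => mul_nonneg hαpos.le (Market.incidence_nonneg _ f w))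
      (by simp [Market.incidence, hw₀, hα₀]) (hα₀ ▸ hαpos)
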